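/- arXiv:2408.08012 — 5 statements merged into one kernel-verified Lean document; each statement's English description precedes it below -/
import Mathlib

section
/- Let G be a group acting on a commutative ring Λ by ring automorphisms and semilinearly on a free Λ-module V, let R be a commutative ring and π : Λ → R a ring homomorphism, and let σ ∈ G satisfy π(σc) = π(c) for all c ∈ Λ. Then for any two finite bases u and v of V one has π(tr M^u(σ)) = π(tr M^v(σ)). (This is the content of Proposition 4.7 of the paper: the evaluations of the trace cocycle are independent of the choice of basis.) -/
/-!
Write `P` for the matrix of `v` in the basis `u`. Applying `σ` semilinearly to
`v j = ∑ i, P i j • u i` and expanding in `u` gives the twisted conjugation `Mu * σ(P) = P * Mv`.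
After applying `π`, which does not see the twist `σ`, this becomes an honest similarity
`π(Mu) * π(P) = π(P) * π(Mv)` with `π(P)` invertible, so the traces agree.
-/

open Matrix

namespace adelicHGF

theorem trace_eq_of_mul_eq_mul {R m n : Type*} [CommSemiring R]
    [Fintype m] [DecidableEq m] [Fintype n] [DecidableEq n]
    {A : Matrix m m R} {B : Matrix n n R} {P : Matrix m n R} {Q : Matrix n m R}
    (hPQ : P * Q = 1) (hQP : Q * P = 1) (h : A * P = P * B) :
    A.trace = B.trace :=
  calc A.trace = (A * P * Q).trace := by rw [Matrix.mul_assoc, hPQ, Matrix.mul_one]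
    _ = (Q * (P * B)).trace := by rw [h, trace_mul_comm]
    _ = B.trace := by rw [← Matrix.mul_assoc, hQP, Matrix.one_mul]

section Semilinear

variable {G Λ V ι κ : Type*} [CommSemiring Λ] [AddCommMonoid V] [Module Λ V]
  [SMul G Λ] [DistribSMul G V] [Fintype ι] [Fintype κ] {σ : G}

theorem repr_smul_of_semilinear
    (hsemi : ∀ (c : Λ) (w : V), σ • (c • w) = (σ • c) • (σ • w))
    (u : Module.Basis ι Λ V) {Mu : Matrix ι ι Λ} (hMu : ∀ j, σ • u j = ∑ i, Mu i j • u i)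
    (w : V) (k : ι) :
    u.repr (σ • w) k = ∑ i, Mu k i * σ • u.repr w i := by
  classical
  conv_lhs => rw [← u.sum_repr w]
  simp only [Finset.smul_sum, hsemi, hMu, map_sum, map_smul, u.repr_self, Finsupp.coe_finsetSum,
    Finset.sum_apply, Finsupp.smul_apply, Finsupp.single_apply, smul_eq_mul, mul_ite, mul_one,
    mul_zero, mul_comm, ite_mul, zero_mul, Finset.sum_ite_eq', Finset.mem_univ, if_true]

theorem mul_smul_toMatrix_eq_toMatrix_mul
    (hsemi : ∀ (c : Λ) (w : V), σ • (c • w) = (σ • c) • (σ • w))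
    (u : Module.Basis ι Λ V) (v : Module.Basis κ Λ V)
    {Mu : Matrix ι ι Λ} {Mv : Matrix κ κ Λ}
    (hMu : ∀ j, σ • u j = ∑ i, Mu i j • u i) (hMv : ∀ j, σ • v j = ∑ i, Mv i j • v i) :
    Mu * (u.toMatrix v).map (σ • ·) = u.toMatrix v * Mv := by
  ext k j
  calc (Mu * (u.toMatrix v).map (σ • ·)) k j = u.repr (σ • v j) k := by
        simp only [repr_smul_of_semilinear hsemi u hMu, mul_apply, map_apply,
          Module.Basis.toMatrix_apply]
    _ = (u.toMatrix v * Mv) k j := by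
        simp only [hMv, map_sum, map_smul, Finsupp.coe_finsetSum, Finset.sum_apply,
          Finsupp.smul_apply, smul_eq_mul, mul_apply, Module.Basis.toMatrix_apply, mul_comm]

end Semilinear

end adelicHGF

theorem adelicHGF.trace_eval_basis_independent_general {G Λ V R ι κ : Type*} [Group G] [CommRing Λ]
    [MulSemiringAction G Λ] [AddCommGroup V] [Module Λ V] [DistribMulAction G V]
    (hsemi : ∀ (σ : G) (c : Λ) (w : V), σ • (c • w) = (σ • c) • (σ • w))
    [CommRing R] (π : Λ →+* R)
    [Fintype ι] [Fintype κ]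
    (u : Module.Basis ι Λ V) (v : Module.Basis κ Λ V)
    (σ : G) (hσ : ∀ c : Λ, π (σ • c) = π c)
    (Mu : Matrix ι ι Λ) (Mv : Matrix κ κ Λ)
    (hMu : ∀ j : ι, σ • u j = ∑ i, Mu i j • u i)
    (hMv : ∀ j : κ, σ • v j = ∑ i, Mv i j • v i) :
    π Mu.trace = π Mv.trace := by
  classical
  have hconj := congrArg (·.map π) (mul_smul_toMatrix_eq_toMatrix_mul (hsemi σ) u v hMu hMv)
  have hPQ := congrArg (·.map π) (u.toMatrix_mul_toMatrix_flip v)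
  have hQP := congrArg (·.map π) (v.toMatrix_mul_toMatrix_flip u)
  simp only [Matrix.map_mul, Matrix.map_map, Function.comp_def, hσ,
    Matrix.map_one π π.map_zero π.map_one] at hconj hPQ hQP
  rw [AddMonoidHom.map_trace, AddMonoidHom.map_trace]
  exact trace_eq_of_mul_eq_mul hPQ hQP hconj

/-- **Proposition 4.7**: Let `G` be a group acting on a commutative ring `Λ` by ring
automorphisms and semilinearly on a free `Λ`-module `V`, let `π : Λ →+* R` be a ring
homomorphism to a commutative ring, and let `σ ∈ G` satisfy `π (σ • c) = π c` for all `c`.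
Then for any two finite bases `u`, `v` of `V`, with cocycle matrices `Mu σ`, `Mv σ`, one has
`π (tr (Mu σ)) = π (tr (Mv σ))`: the evaluations of the trace cocycle are independent of the
choice of basis. -/
theorem adelicHGF.trace_eval_basis_independent {G Λ V R ι κ : Type*} [Group G] [CommRing Λ]
    [MulSemiringAction G Λ] [AddCommGroup V] [Module Λ V] [DistribMulAction G V]
    (hsemi : ∀ (σ : G) (c : Λ) (w : V), σ • (c • w) = (σ • c) • (σ • w))
    [CommRing R] (π : Λ →+* R)
    [Fintype ι] [DecidableEq ι] [Fintype κ] [DecidableEq κ]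
    (u : Module.Basis ι Λ V) (v : Module.Basis κ Λ V)
    (σ : G) (hσ : ∀ c : Λ, π (σ • c) = π c)
    (Mu : Matrix ι ι Λ) (Mv : Matrix κ κ Λ)
    (hMu : ∀ j : ι, σ • u j = ∑ i, Mu i j • u i)
    (hMv : ∀ j : κ, σ • v j = ∑ i, Mv i j • v i) :
    π Mu.trace = π Mv.trace :=
  adelicHGF.trace_eval_basis_independent_general hsemi π u v σ hσ Mu Mv hMu hMv
end

section
/- Let τ : ℤ[Δ_N] → ℤ^{ℤ/Nℤ} × ℤ^{ℤ/Nℤ} be the ℤ-linear map sending ∑_{i,j} n_{i,j} ξ_N^i η_N^j to the pair of marginal sums ((∑_j n_{i,j})_{i∈ℤ/Nℤ}, (∑_i n_{i,j})_{j∈ℤ/Nℤ}). Then the kernel of τ equals the ideal of ℤ[Δ_N] generated by the element (1−ξ_N)(1−η_N). (Claim established in the proof of Theorem 2.5(i) of the paper.) -/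
/-- `Δ_N`: the multiplicative group `(ℤ/Nℤ) × (ℤ/Nℤ)`. -/
abbrev adelicHGF.Delta (N : ℕ) : Type := Multiplicative (ZMod N × ZMod N)

namespace adelicHGF

/-- The generator `ξ_N = (1,0)` of `Δ_N`. -/
def xi (N : ℕ) : Delta N := Multiplicative.ofAdd ((1 : ZMod N), (0 : ZMod N))

/-- The generator `η_N = (0,1)` of `Δ_N`. -/
def eta (N : ℕ) : Delta N := Multiplicative.ofAdd ((0 : ZMod N), (1 : ZMod N))

end adelicHGF

/-!
Write `f = ∑ c_{ij} X^{(i,j)}`. Since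
`X^{(i,j)} - X^{(i,0)} - X^{(0,j)} + 1 = (1 - X^{(i,0)}) (1 - X^{(0,j)})`, `f` is congruent modulo
the ideal generated by these products to `∑ r_i X^{(i,0)} + ∑ s_j X^{(0,j)} - ∑ c_{ij}`, where
`r`, `s` are the row and column sums of `c`; so vanishing marginals put `f` in that ideal.
Conversely the marginals of `f` are the coefficients of its images under the ring maps
`ℤ[Δ] → ℤ[ℤ/N]` induced by the two projections, which kill `1 - η` resp. `1 - ξ`. Finally, as `1 - ξ ∣ 1 - ξ^i`, the ideal is
generated by `(1 - ξ)(1 - η)` alone.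
-/

open MonoidAlgebra

namespace adelicHGF

section

variable (R A B : Type*) [CommRing R] [AddCommMonoid A] [AddCommMonoid B]

local notation "X" p:max => MonoidAlgebra.of R (Multiplicative (A × B)) (Multiplicative.ofAdd p)

/-- The product of the augmentation ideals of `R[A]` and `R[B]`, extended to `R[A × B]`. -/
noncomputable def doubleDifferenceIdeal : Ideal (MonoidAlgebra R (Multiplicative (A × B))) :=
  Ideal.span (Set.range fun p : A × B => (1 - X (p.1, 0)) * (1 - X (0, p.2)))

def fstHom : Multiplicative (A × B) →* Multiplicative A :=
  AddMonoidHom.toMultiplicative (AddMonoidHom.fst A B)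

def sndHom : Multiplicative (A × B) →* Multiplicative B :=
  AddMonoidHom.toMultiplicative (AddMonoidHom.snd A B)

variable {R A B}

lemma of_ofAdd_eq_mul (a : A) (b : B) : X (a, b) = X (a, 0) * X (0, b) := by
  rw [← map_mul, ← ofAdd_add, Prod.mk_add_mk, add_zero, zero_add]

lemma of_sub_of_sub_of_add_one_mem (a : A) (b : B) :
    X (a, b) - X (a, 0) - X (0, b) + 1 ∈ doubleDifferenceIdeal R A B := by
  have h : X (a, b) - X (a, 0) - X (0, b) + 1 = (1 - X (a, 0)) * (1 - X (0, b)) := by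
    rw [of_ofAdd_eq_mul]; ring
  exact h ▸ Ideal.subset_span ⟨(a, b), rfl⟩

lemma mapDomainRingHom_of {M N : Type*} [Monoid M] [Monoid N] (φ : M →* N) (m : M) :
    mapDomainRingHom R φ (of R M m) = of R N (φ m) := by
  rw [of_apply, of_apply, mapDomainRingHom_apply, mapDomain_single]

lemma doubleDifferenceIdeal_le_ker_fstHom :
    doubleDifferenceIdeal R A B ≤ RingHom.ker (mapDomainRingHom R (fstHom A B)) := by
  refine Ideal.span_le.mpr ?_
  rintro _ ⟨⟨a, b⟩, rfl⟩
  have h : fstHom A B (Multiplicative.ofAdd (0, b)) = 1 := rfl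
  simp only [SetLike.mem_coe, RingHom.mem_ker, map_mul, map_sub, map_one, mapDomainRingHom_of, h,
    sub_self, mul_zero]

lemma doubleDifferenceIdeal_le_ker_sndHom :
    doubleDifferenceIdeal R A B ≤ RingHom.ker (mapDomainRingHom R (sndHom A B)) := by
  refine Ideal.span_le.mpr ?_
  rintro _ ⟨⟨a, b⟩, rfl⟩
  have h : sndHom A B (Multiplicative.ofAdd (a, 0)) = 1 := rfl
  simp only [SetLike.mem_coe, RingHom.mem_ker, map_mul, map_sub, map_one, mapDomainRingHom_of, h,
    sub_self, zero_mul]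

lemma coeff_mapDomainRingHom_fstHom [Fintype B] (f : MonoidAlgebra R (Multiplicative (A × B)))
    (a : A) :
    (mapDomainRingHom R (fstHom A B) f).coeff (Multiplicative.ofAdd a) =
      ∑ b, f.coeff (Multiplicative.ofAdd (a, b)) := by
  classical
  induction f using MonoidAlgebra.induction_linear with
  | zero => simp
  | add f g hf hg =>
    rw [map_add, coeff_add, Finsupp.add_apply, hf, hg, coeff_add, ← Finset.sum_add_distrib]
    rfl
  | single g r =>
    obtain ⟨⟨a', b'⟩, rfl⟩ := Multiplicative.ofAdd.surjective g
    rw [mapDomainRingHom_apply, mapDomain_single]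
    by_cases h : a = a' <;> simp [fstHom, Finsupp.single_apply, eq_comm, h]

lemma coeff_mapDomainRingHom_sndHom [Fintype A] (f : MonoidAlgebra R (Multiplicative (A × B)))
    (b : B) :
    (mapDomainRingHom R (sndHom A B) f).coeff (Multiplicative.ofAdd b) =
      ∑ a, f.coeff (Multiplicative.ofAdd (a, b)) := by
  classical
  induction f using MonoidAlgebra.induction_linear with
  | zero => simp
  | add f g hf hg =>
    rw [map_add, coeff_add, Finsupp.add_apply, hf, hg, coeff_add, ← Finset.sum_add_distrib]
    rfl
  | single g r =>
    obtain ⟨⟨a', b'⟩, rfl⟩ := Multiplicative.ofAdd.surjective g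
    rw [mapDomainRingHom_apply, mapDomain_single]
    by_cases h : b = b' <;> simp [sndHom, Finsupp.single_apply, eq_comm, h]

variable [Fintype A] [Fintype B]

lemma sum_coeff_smul_of (f : MonoidAlgebra R (Multiplicative (A × B))) :
    ∑ p : A × B, f.coeff (Multiplicative.ofAdd p) • X p = f := by
  classical
  induction f using MonoidAlgebra.induction_linear with
  | zero => simp
  | add f g hf hg =>
    simp only [coeff_add, Finsupp.add_apply, add_smul, Finset.sum_add_distrib, hf, hg]
  | single g r =>
    obtain ⟨p, rfl⟩ := Multiplicative.ofAdd.surjective g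
    simp [Finsupp.single_apply, of_apply]

lemma mem_doubleDifferenceIdeal_of_marginals {f : MonoidAlgebra R (Multiplicative (A × B))}
    (hrow : ∀ a, ∑ b, f.coeff (Multiplicative.ofAdd (a, b)) = 0)
    (hcol : ∀ b, ∑ a, f.coeff (Multiplicative.ofAdd (a, b)) = 0) :
    f ∈ doubleDifferenceIdeal R A B := by
  set c : A × B → R := fun p => f.coeff (Multiplicative.ofAdd p)
  have hrow' : ∑ p : A × B, c p • X (p.1, 0) = 0 := by
    rw [Fintype.sum_prod_type]
    simp only [← Finset.sum_smul, c, hrow, zero_smul, Finset.sum_const_zero]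
  have hcol' : ∑ p : A × B, c p • X (0, p.2) = 0 := by
    rw [Fintype.sum_prod_type_right]
    simp only [← Finset.sum_smul, c, hcol, zero_smul, Finset.sum_const_zero]
  have htotal : ∑ p : A × B, c p • (1 : MonoidAlgebra R (Multiplicative (A × B))) = 0 := by
    rw [Fintype.sum_prod_type]
    simp only [← Finset.sum_smul, c, hrow, zero_smul, Finset.sum_const_zero]
  have hf : f = ∑ p : A × B, c p • (X p - X (p.1, 0) - X (0, p.2) + 1) := by
    simp only [smul_add, smul_sub, Finset.sum_add_distrib, Finset.sum_sub_distrib, hrow', hcol',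
      htotal, sub_zero, add_zero, c, sum_coeff_smul_of]
  rw [hf]
  exact Ideal.sum_mem _ fun p _ =>
    Submodule.smul_of_tower_mem _ _ (of_sub_of_sub_of_add_one_mem p.1 p.2)

lemma marginals_eq_zero_of_mem_doubleDifferenceIdeal
    {f : MonoidAlgebra R (Multiplicative (A × B))} (hf : f ∈ doubleDifferenceIdeal R A B) :
    (∀ a, ∑ b, f.coeff (Multiplicative.ofAdd (a, b)) = 0) ∧
      ∀ b, ∑ a, f.coeff (Multiplicative.ofAdd (a, b)) = 0 := by
  refine ⟨fun a => ?_, fun b => ?_⟩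
  · rw [← coeff_mapDomainRingHom_fstHom,
      RingHom.mem_ker.mp (doubleDifferenceIdeal_le_ker_fstHom hf), coeff_zero, Finsupp.coe_zero,
      Pi.zero_apply]
  · rw [← coeff_mapDomainRingHom_sndHom,
      RingHom.mem_ker.mp (doubleDifferenceIdeal_le_ker_sndHom hf), coeff_zero, Finsupp.coe_zero,
      Pi.zero_apply]

lemma mem_doubleDifferenceIdeal_iff (f : MonoidAlgebra R (Multiplicative (A × B))) :
    f ∈ doubleDifferenceIdeal R A B ↔
      (∀ a, ∑ b, f.coeff (Multiplicative.ofAdd (a, b)) = 0) ∧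
        ∀ b, ∑ a, f.coeff (Multiplicative.ofAdd (a, b)) = 0 :=
  ⟨marginals_eq_zero_of_mem_doubleDifferenceIdeal,
    fun h => mem_doubleDifferenceIdeal_of_marginals h.1 h.2⟩

end

lemma xi_pow_val {N : ℕ} [NeZero N] (a : ZMod N) : xi N ^ a.val = Multiplicative.ofAdd (a, 0) := by
  rw [xi, ← ofAdd_nsmul, Prod.smul_mk, smul_zero, nsmul_eq_mul, mul_one, ZMod.natCast_zmod_val]

lemma eta_pow_val {N : ℕ} [NeZero N] (b : ZMod N) :
    eta N ^ b.val = Multiplicative.ofAdd (0, b) := by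
  rw [eta, ← ofAdd_nsmul, Prod.smul_mk, smul_zero, nsmul_eq_mul, mul_one, ZMod.natCast_zmod_val]

theorem doubleDifferenceIdeal_zmod_eq_span (R : Type*) [CommRing R] (N : ℕ) [NeZero N] :
    doubleDifferenceIdeal R (ZMod N) (ZMod N) =
      Ideal.span {(1 - of R (Delta N) (xi N)) * (1 - of R (Delta N) (eta N))} := by
  apply le_antisymm
  · refine Ideal.span_le.mpr ?_
    rintro _ ⟨⟨a, b⟩, rfl⟩
    dsimp only
    rw [SetLike.mem_coe, Ideal.mem_span_singleton, ← xi_pow_val, ← eta_pow_val, map_pow, map_pow]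
    exact mul_dvd_mul (one_sub_dvd_one_sub_pow _ _) (one_sub_dvd_one_sub_pow _ _)
  · rw [Ideal.span_singleton_le_iff_mem]
    exact Ideal.subset_span ⟨(1, 1), rfl⟩

end adelicHGF

open adelicHGF in
/-- **Claim in the proof of Theorem 2.5(i)**: let `τ : ℤ[Δ_N] → ℤ^{ℤ/Nℤ} × ℤ^{ℤ/Nℤ}` be the
`ℤ`-linear map sending `∑_{i,j} n_{i,j} ξ_N^i η_N^j` to the pair of marginal sums
`((∑_j n_{i,j})_i, (∑_i n_{i,j})_j)`.  Then the kernel of `τ` equals the ideal of `ℤ[Δ_N]`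
generated by `(1 - ξ_N)(1 - η_N)`.  (An element `f` of the group ring is in the kernel iff all
of its marginal sums vanish.) -/
theorem adelicHGF.ker_marginal_eq_span (N : ℕ) [NeZero N] (f : MonoidAlgebra ℤ (Delta N)) :
    ((∀ i : ZMod N, ∑ j : ZMod N, f.coeff (Multiplicative.ofAdd (i, j)) = 0) ∧
      (∀ j : ZMod N, ∑ i : ZMod N, f.coeff (Multiplicative.ofAdd (i, j)) = 0)) ↔
    f ∈ Ideal.span {(1 - MonoidAlgebra.of ℤ (Delta N) (xi N)) *
        (1 - MonoidAlgebra.of ℤ (Delta N) (eta N))} := by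
  rw [← doubleDifferenceIdeal_zmod_eq_span]
  exact (mem_doubleDifferenceIdeal_iff f).symm
end

section
/- For every positive integer N, the annihilator of the element (1−ξ_N)(1−η_N) in the ring ℤ[Δ_N] equals the ideal I_N; equivalently, the annihilator ideal of the cyclic ℤ[Δ_N]-module ℤ[Δ_N]·(1−ξ_N)(1−η_N) is I_N. (Claim used in the proof of Theorem 2.5(ii) of the paper.) -/
namespace adelicHGF

/-- The element `∑_{i ∈ ℤ/Nℤ} ξ_N^i` of the group ring `ℤ[Δ_N]`. -/
noncomputable def sumXi (N : ℕ) [NeZero N] : MonoidAlgebra ℤ (Delta N) :=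
  ∑ i : ZMod N, MonoidAlgebra.of ℤ (Delta N) (Multiplicative.ofAdd (i, (0 : ZMod N)))

/-- The element `∑_{j ∈ ℤ/Nℤ} η_N^j` of the group ring `ℤ[Δ_N]`. -/
noncomputable def sumEta (N : ℕ) [NeZero N] : MonoidAlgebra ℤ (Delta N) :=
  ∑ j : ZMod N, MonoidAlgebra.of ℤ (Delta N) (Multiplicative.ofAdd ((0 : ZMod N), j))

/-- The ideal `I_N ⊆ ℤ[Δ_N]` generated by `∑_i ξ_N^i` and `∑_j η_N^j`. -/
noncomputable def IN (N : ℕ) [NeZero N] : Ideal (MonoidAlgebra ℤ (Delta N)) :=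
  Ideal.span {sumXi N, sumEta N}

end adelicHGF

/-! Write `f = ∑ a(i,j) ξ^i η^j`. The coefficient of `f (1 - ξ)(1 - η)` at `ξ^i η^j` is the mixed
second difference of `a`. When it vanishes, each difference `a(i,j) - a(i-1,j)` is invariant under
`j ↦ j + 1`, hence independent of `j` because `1` generates `ℤ/N`; so `a(i,j) = b(i) + c(j)`, which
says `f = (∑ c(j) η^j) · ∑ ξ^i + (∑ b(i) ξ^i) · ∑ η^j ∈ I_N`. Conversely `∑ ξ^i` and `∑ η^j` are
killed by `1 - ξ` and `1 - η` respectively. -/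

open MonoidAlgebra Multiplicative

namespace MonoidAlgebra

variable {R G : Type*} [Ring R] [Group G]

theorem coeff_mul_one_sub_of (x : MonoidAlgebra R G) (g h : G) :
    (x * (1 - of R G g)).coeff h = x.coeff h - x.coeff (h * g⁻¹) := by
  rw [mul_sub, mul_one, coeff_sub, Finsupp.sub_apply, of_apply, coeff_mul_single_apply, mul_one]

theorem sum_of_mul_one_sub_of {A : Type*} [AddGroup A] [Fintype A] (φ : Multiplicative A →* G)
    (a : A) : (∑ b : A, of R G (φ (ofAdd b))) * (1 - of R G (φ (ofAdd a))) = 0 := by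
  rw [mul_sub, mul_one, sub_eq_zero, eq_comm, Finset.sum_mul]
  exact Fintype.sum_equiv (Equiv.addRight a) _ _ fun b => by simp [← map_mul]

theorem eq_sum_coeff_smul_of [Fintype G] (x : MonoidAlgebra R G) :
    x = ∑ g, x.coeff g • of R G g := by
  conv_lhs => rw [← sum_coeff_single x, Finsupp.sum_fintype _ _ fun _ => single_zero _]
  simp

end MonoidAlgebra

namespace ZMod

variable {m n : ℕ} {M : Type*} [AddCommGroup M]

theorem apply_eq_apply_zero_of_apply_add_one {α : Type*} {φ : ZMod n → α}
    (h : ∀ j, φ (j + 1) = φ j) (j : ZMod n) : φ j = φ 0 := by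
  obtain ⟨k, rfl⟩ := ZMod.intCast_surjective j
  induction k using Int.induction_on with
  | zero => simp
  | succ k ih => rw [Int.cast_add, Int.cast_one, h, ih]
  | pred k ih => rw [← ih, ← h, Int.cast_sub, Int.cast_one, sub_add_cancel]

theorem eq_add_of_mixed_difference_eq_zero {a : ZMod m → ZMod n → M}
    (h : ∀ i j, a i j - a (i - 1) j - a i (j - 1) + a (i - 1) (j - 1) = 0) (i : ZMod m)
    (j : ZMod n) : a i j = a i 0 + a 0 j - a 0 0 := by
  have hrow : ∀ i j, a i j - a (i - 1) j = a i 0 - a (i - 1) 0 := fun i =>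
    apply_eq_apply_zero_of_apply_add_one fun j => by
      rw [← sub_eq_zero, ← h i (j + 1), add_sub_cancel_right]; abel
  have hcol : a i j - a i 0 = a 0 j - a 0 0 :=
    apply_eq_apply_zero_of_apply_add_one (φ := fun i => a i j - a i 0) (fun i => by
      rw [← sub_eq_zero, ← sub_eq_zero.2 (hrow (i + 1) j), add_sub_cancel_right]; abel) i
  rw [add_sub_assoc, ← hcol]
  abel

end ZMod

namespace adelicHGF

variable {N : ℕ}

theorem coeff_mul_one_sub_xi_mul_one_sub_eta (f : MonoidAlgebra ℤ (Delta N)) (i j : ZMod N) :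
    (f * ((1 - of ℤ (Delta N) (xi N)) * (1 - of ℤ (Delta N) (eta N)))).coeff (ofAdd (i, j)) =
      f.coeff (ofAdd (i, j)) - f.coeff (ofAdd (i - 1, j)) - f.coeff (ofAdd (i, j - 1)) +
        f.coeff (ofAdd (i - 1, j - 1)) := by
  simp only [← mul_assoc, coeff_mul_one_sub_of, xi, eta, ← ofAdd_neg, ← ofAdd_add, Prod.neg_mk,
    Prod.mk_add_mk, neg_zero, add_zero, ← sub_eq_add_neg]
  abel

variable [NeZero N]

theorem sumXi_mul_one_sub_xi : sumXi N * (1 - of ℤ (Delta N) (xi N)) = 0 := by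
  simpa [sumXi, xi] using
    sum_of_mul_one_sub_of (R := ℤ) (AddMonoidHom.inl (ZMod N) (ZMod N)).toMultiplicative 1

theorem sumEta_mul_one_sub_eta : sumEta N * (1 - of ℤ (Delta N) (eta N)) = 0 := by
  simpa [sumEta, eta] using
    sum_of_mul_one_sub_of (R := ℤ) (AddMonoidHom.inr (ZMod N) (ZMod N)).toMultiplicative 1

theorem mul_one_sub_xi_mul_one_sub_eta_of_mem_IN {f : MonoidAlgebra ℤ (Delta N)}
    (hf : f ∈ IN N) :
    f * ((1 - of ℤ (Delta N) (xi N)) * (1 - of ℤ (Delta N) (eta N))) = 0 := by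
  obtain ⟨u, v, rfl⟩ := Ideal.mem_span_pair.1 hf
  linear_combination (u * (1 - of ℤ (Delta N) (eta N))) * sumXi_mul_one_sub_xi (N := N) +
    (v * (1 - of ℤ (Delta N) (xi N))) * sumEta_mul_one_sub_eta (N := N)

theorem sum_smul_of_mul_sumXi (c : ZMod N → ℤ) :
    (∑ j, c j • of ℤ (Delta N) (ofAdd (0, j))) * sumXi N =
      ∑ i, ∑ j, c j • of ℤ (Delta N) (ofAdd (i, j)) := by
  rw [sumXi, Finset.sum_mul_sum, Finset.sum_comm]
  simp only [smul_mul_assoc, ← map_mul, ← ofAdd_add, Prod.mk_add_mk, zero_add, add_zero]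

theorem sum_smul_of_mul_sumEta (b : ZMod N → ℤ) :
    (∑ i, b i • of ℤ (Delta N) (ofAdd (i, 0))) * sumEta N =
      ∑ i, ∑ j, b i • of ℤ (Delta N) (ofAdd (i, j)) := by
  rw [sumEta, Finset.sum_mul_sum]
  simp only [smul_mul_assoc, ← map_mul, ← ofAdd_add, Prod.mk_add_mk, zero_add, add_zero]

theorem mem_IN_of_coeff_eq_add {f : MonoidAlgebra ℤ (Delta N)} (b c : ZMod N → ℤ)
    (hf : ∀ i j, f.coeff (ofAdd (i, j)) = b i + c j) : f ∈ IN N := by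
  refine Ideal.mem_span_pair.2 ⟨∑ j, c j • of ℤ (Delta N) (ofAdd (0, j)),
    ∑ i, b i • of ℤ (Delta N) (ofAdd (i, 0)), ?_⟩
  rw [sum_smul_of_mul_sumXi, sum_smul_of_mul_sumEta, ← Finset.sum_add_distrib,
    eq_sum_coeff_smul_of f, ← ofAdd.sum_comp, Fintype.sum_prod_type]
  simp only [← Finset.sum_add_distrib, ← add_smul, hf, add_comm]

end adelicHGF

open adelicHGF in
/-- **Claim used in the proof of Theorem 2.5(ii)**: for every positive integer `N`, the
annihilator of the element `(1 - ξ_N)(1 - η_N)` in the ring `ℤ[Δ_N]` equals the ideal `I_N`: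
`f · (1 - ξ_N)(1 - η_N) = 0` if and only if `f ∈ I_N`. -/
theorem adelicHGF.ann_one_sub_xi_mul_one_sub_eta (N : ℕ) [NeZero N]
    (f : MonoidAlgebra ℤ (Delta N)) :
    f * ((1 - MonoidAlgebra.of ℤ (Delta N) (xi N)) *
        (1 - MonoidAlgebra.of ℤ (Delta N) (eta N))) = 0 ↔ f ∈ IN N := by
  refine ⟨fun h => ?_, mul_one_sub_xi_mul_one_sub_eta_of_mem_IN⟩
  set a : ZMod N → ZMod N → ℤ := fun i j => f.coeff (ofAdd (i, j))
  have hmixed : ∀ i j, a i j - a (i - 1) j - a i (j - 1) + a (i - 1) (j - 1) = 0 := fun i j => by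
    rw [← coeff_mul_one_sub_xi_mul_one_sub_eta, h, coeff_zero, Finsupp.zero_apply]
  exact mem_IN_of_coeff_eq_add (fun i => a i 0 - a 0 0) (fun j => a 0 j) fun i j =>
    (ZMod.eq_add_of_mixed_difference_eq_zero hmixed i j).trans (by ring)
end

section
/- Let κ be a finite field, let α and β be nontrivial multiplicative characters of κ with values in ℂ (extended by α(0) = β(0) = 0), and write ᾱ, β̄ for the characters x ↦ α(x)⁻¹, x ↦ β(x)⁻¹ on κˣ, extended by 0 at 0. Then for every λ ∈ κ with λ ≠ 0 and λ ≠ 1, ∑_{t∈κ} ᾱ(1−λt) β(t) β̄(1−t) = β(−1) · ∑_{(u,v)∈κ², (1−u)(1−v)=λuv} α(u) β(v). (This character-sum identity is the paper's derivation of its formula (hgf-fin-i2), expressing the finite-field hypergeometric value F(α,β;ε;λ) as a point count on the hypergeometric curve.) -/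
/-!
The map `t ↦ u = (1 - λt)⁻¹` is a permutation of `κ`, with inverse `u ↦ (1 - u⁻¹)/λ`, and it
turns `ᾱ(1 - λt)` into `α(u)` and `β(t) β̄(1 - t) = β(t/(1 - t))` into `β(-1) β(v)` with
`v = (1 - u)/(1 - u + λu)`. On the other side, for fixed `u` the curve equation
`(1 - u)(1 - v) = λuv` is the linear equation `v (1 - u + λu) = 1 - u` in `v`, whose only
solution is that same `v`.
-/

namespace MulChar

variable {K R : Type*} [CommGroupWithZero K] [CommMonoidWithZero R]

theorem inv_apply_inv (χ : MulChar K R) (a : K) : χ⁻¹ a⁻¹ = χ a := by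
  rw [inv_apply', inv_inv]

theorem mul_inv_apply (χ : MulChar K R) (a b : K) : χ a * χ⁻¹ b = χ (a / b) := by
  rw [inv_apply', ← map_mul, div_eq_mul_inv]

end MulChar

section FieldSums

variable {K : Type*} [Field K]

theorem one_sub_inv_div_div_one_sub {l u : K} (hl : l ≠ 0) (hu : u ≠ 0) :
    (1 - u⁻¹) / l / (1 - (1 - u⁻¹) / l) = (u - 1) / (1 - u + l * u) := by
  have hlu : l * u ≠ 0 := mul_ne_zero hl hu
  have ht : (1 - u⁻¹) / l = (u - 1) / (l * u) := by field_simp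
  have h1t : 1 - (u - 1) / (l * u) = (1 - u + l * u) / (l * u) := by field_simp; ring
  rw [ht, h1t, div_div_div_cancel_right₀ hlu]

variable {M : Type*} [Fintype K] [AddCommMonoid M]

theorem Finset.sum_comp_one_sub_inv_div {l : K} (hl : l ≠ 0) (F : K → M) :
    ∑ t, F t = ∑ u, F ((1 - u⁻¹) / l) := by
  have left_inv (t : K) : (1 - (1 - l * t)⁻¹⁻¹) / l = t := by
    rw [inv_inv, sub_sub_cancel, mul_div_cancel_left₀ t hl]
  refine Finset.sum_nbij' (fun t => (1 - l * t)⁻¹) (fun u => (1 - u⁻¹) / l)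
    (by simp) (by simp) (fun t _ => left_inv t) (fun u _ => ?_) (fun t _ => by rw [left_inv])
  rw [mul_div_cancel₀ _ hl, sub_sub_cancel, inv_inv]

variable [DecidableEq K]

/-- Since `b / 0 = 0`, the hypothesis `g 0 = 0` also covers `a = 0`, where there is no solution. -/
theorem Finset.sum_filter_mul_eq (g : K → M) (hg : g 0 = 0) {a b : K} (hab : a = 0 → b ≠ 0) :
    ∑ v ∈ univ.filter (fun v => v * a = b), g v = g (b / a) := by
  by_cases ha : a = 0
  · have hb := hab ha
    subst ha
    simp [Ne.symm hb, hg]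
  · simp_rw [← eq_div_iff ha, Finset.filter_eq', Finset.mem_univ, if_true,
      Finset.sum_singleton]

theorem sum_curve_eq_sum_graph {l : K} (hl : l ≠ 0) (F : K → K → M) (hF : ∀ u, F u 0 = 0) :
    ∑ p ∈ Finset.univ.filter (fun p : K × K => (1 - p.1) * (1 - p.2) = l * p.1 * p.2),
        F p.1 p.2 =
      ∑ u, F u ((1 - u) / (1 - u + l * u)) := by
  rw [Finset.sum_filter, Fintype.sum_prod_type]
  refine Fintype.sum_congr _ _ fun u => ?_
  have linear_in_v : ∀ v, (1 - u) * (1 - v) = l * u * v ↔ v * (1 - u + l * u) = 1 - u :=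
    fun v => ⟨fun h => by linear_combination -h, fun h => by linear_combination -h⟩
  simp_rw [← Finset.sum_filter, linear_in_v]
  refine Finset.sum_filter_mul_eq (F u) (hF u) fun h h' => hl ?_
  have hu : u = 1 := by linear_combination -h'
  subst hu
  linear_combination h

end FieldSums

theorem adelicHGF.finite_hgf_point_count_general {κ : Type*} [Field κ] [Fintype κ] [DecidableEq κ]
    (α β : MulChar κ ℂ)
    (l : κ) (hl0 : l ≠ 0) :
    ∑ t : κ, α⁻¹ (1 - l * t) * β t * β⁻¹ (1 - t) =
      β (-1) *
        ∑ p ∈ Finset.univ.filter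
            (fun p : κ × κ => (1 - p.1) * (1 - p.2) = l * p.1 * p.2),
          α p.1 * β p.2 := by
  have summand_eq (u : κ) :
      α⁻¹ (1 - l * ((1 - u⁻¹) / l)) * β ((1 - u⁻¹) / l) * β⁻¹ (1 - (1 - u⁻¹) / l) =
        β (-1) * (α u * β ((1 - u) / (1 - u + l * u))) := by
    rw [mul_div_cancel₀ _ hl0, sub_sub_cancel, MulChar.inv_apply_inv, mul_assoc,
      MulChar.mul_inv_apply, mul_left_comm, ← map_mul, neg_one_mul, ← neg_div, neg_sub]
    rcases eq_or_ne u 0 with rfl | hu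
    · simp [MulChar.map_zero]
    · rw [one_sub_inv_div_div_one_sub hl0 hu]
  rw [sum_curve_eq_sum_graph hl0 (fun u v => α u * β v) fun u => by simp [MulChar.map_zero],
    Finset.mul_sum, Finset.sum_comp_one_sub_inv_div hl0]
  exact Fintype.sum_congr _ _ summand_eq

/-- **Character-sum identity behind formula (hgf-fin-i2)**: let `κ` be a finite field, `α`,
`β` nontrivial multiplicative characters of `κ` with values in `ℂ` (extended by `0` at `0`;
`α⁻¹`, `β⁻¹` denote the inverse characters `x ↦ α(x)⁻¹`, `x ↦ β(x)⁻¹`, also extended by `0`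
at `0`).  Then for every `λ ∈ κ` with `λ ≠ 0`, `λ ≠ 1`:
`∑_{t∈κ} α⁻¹(1−λt) β(t) β⁻¹(1−t) = β(−1) · ∑_{(u,v): (1−u)(1−v)=λuv} α(u) β(v)`. -/
theorem adelicHGF.finite_hgf_point_count {κ : Type*} [Field κ] [Fintype κ] [DecidableEq κ]
    (α β : MulChar κ ℂ) (hα : α ≠ 1) (hβ : β ≠ 1)
    (l : κ) (hl0 : l ≠ 0) (hl1 : l ≠ 1) :
    ∑ t : κ, α⁻¹ (1 - l * t) * β t * β⁻¹ (1 - t) =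
      β (-1) *
        ∑ p ∈ Finset.univ.filter
            (fun p : κ × κ => (1 - p.1) * (1 - p.2) = l * p.1 * p.2),
          α p.1 * β p.2 :=
  adelicHGF.finite_hgf_point_count_general α β l hl0
end

section
/- Let κ be a finite field with q elements, N a positive integer dividing q−1, and κ̄ an algebraic closure of κ. Fix a group isomorphism ι from the group μ_N(ℂ) of complex N-th roots of unity to μ_N(κ) = { x ∈ κˣ : x^N = 1 }, and define φ : κ → ℂ by φ(0) = 0 and φ(x) = ι⁻¹(x^{(q−1)/N}) for x ∈ κˣ. Then for all integers a, b with 1 ≤ a, b ≤ N−1 and every λ ∈ κ with λ ≠ 0 and λ ≠ 1: (1/N²) ∑_{ζ₁,ζ₂ ∈ μ_N(ℂ)} ζ₁^a ζ₂^b · #{ (x,y) ∈ κ̄² : (1−x^N)(1−y^N) = λ x^N y^N, x^q = ι(ζ₁)·x, y^q = ι(ζ₂)·y } = ∑_{(u,v)∈κ², (1−u)(1−v)=λuv} φ(u)^a φ(v)^b, where each set counted is finite. (This is the twisted point-counting identity established in the proof of Theorem 3.2 of the paper, identifying the χ^{a,b}-eigencomponent of the Frobenius-twisted point count of the hypergeometric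 curve with a finite-field hypergeometric value.) -/
/-!
Sort the twisted points `(x, y)` by `(x ^ N, y ^ N)`. If `x ^ q = c x` with `c ^ N = 1`, then
`x ^ N` is fixed by Frobenius, hence lies in `κ`; so the twisted points lie over the `κ`-points
`(u, v)` of `(1 - u)(1 - v) = λ u v`, including those with `u = 0` or `v = 0`. Write
`q = N m + 1`. Over `u ≠ 0` the fibre consists of all `N` roots of `x ^ N = u` when `u ^ m = c`
(because then `x ^ q = u ^ m x`) and is empty otherwise; over `u = 0` it is `{0}` for every `c`.
Weighting by `ζ ^ a` and summing over `μ_N(ℂ)` therefore turns the fibre count over `u` into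
`N φ(u) ^ a`: at `u = 0` by orthogonality of the character `ζ ↦ ζ ^ a`, which is nontrivial
because `0 < a < N`.
-/

namespace adelicHGF

/-- The set of points `(x,y)` of the hypergeometric curve
`(1−x^N)(1−y^N) = λ x^N y^N` over the algebraic closure `K` of `κ` on which the `q`-power
Frobenius acts as multiplication by the pair of constants `(c₁, c₂) ∈ κ²`. -/
def frobTwistedPoints (κ K : Type*) [Field κ] [Field K] [Algebra κ K]
    (N q : ℕ) (l c₁ c₂ : κ) : Set (K × K) :=
  {p : K × K |
    (1 - p.1 ^ N) * (1 - p.2 ^ N) = algebraMap κ K l * p.1 ^ N * p.2 ^ N ∧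
    p.1 ^ q = algebraMap κ K c₁ * p.1 ∧
    p.2 ^ q = algebraMap κ K c₂ * p.2}

noncomputable instance instFintypeRootsOfUnityComplex (N : ℕ) [NeZero N] :
    Fintype (rootsOfUnity N ℂ) :=
  Fintype.ofFinite _

open Polynomial Finset

section general

variable {κ K : Type*} [Field κ] [Field K]

theorem natCast_ne_zero_of_dvd_card_sub_one [Fintype κ] {N : ℕ}
    (hN : N ∣ Fintype.card κ - 1) : (N : κ) ≠ 0 := by
  obtain ⟨m, hm⟩ := hN
  have hcard : Fintype.card κ = N * m + 1 := by have := Fintype.card_pos (α := κ); omega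
  intro h
  simpa [hcard, h] using FiniteField.cast_card_eq_zero κ

theorem exists_algebraMap_eq_of_pow_card_eq_self [Fintype κ] [Algebra κ K] {x : K}
    (hx : x ^ Fintype.card κ = x) : ∃ u : κ, algebraMap κ K u = x := by
  have hq := Fintype.one_lt_card (α := κ)
  have hsplit : (X ^ Fintype.card κ - X : κ[X]).Splits := by
    rw [splits_iff_card_roots, FiniteField.roots_X_pow_card_sub_X, ← Finset.card_def,
      Finset.card_univ, FiniteField.X_pow_card_sub_X_natDegree_eq κ hq]
  exact hsplit.mem_range_of_isRoot (FiniteField.X_pow_card_sub_X_ne_zero κ hq)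
    (by simp [hx])

theorem exists_algebraMap_eq_pow_of_pow_card_eq_mul [Fintype κ] [Algebra κ K] {N : ℕ} {c : κ}
    (hc : c ^ N = 1) {x : K} (hx : x ^ Fintype.card κ = algebraMap κ K c * x) : ∃ u : κ, algebraMap κ K u = x ^ N :=
  exists_algebraMap_eq_of_pow_card_eq_self <| by
    rw [← pow_mul, mul_comm, pow_mul, hx, mul_pow, ← map_pow, hc, map_one, one_mul]

theorem card_nthRootsFinset_of_isAlgClosed [IsAlgClosed K] {n : ℕ} (hn : (n : K) ≠ 0)
    {a : K} (ha : a ≠ 0) : #(nthRootsFinset n a) = n := by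
  classical
  have : NeZero (n : K) := ⟨hn⟩
  have hpos : 0 < n := Nat.pos_of_ne_zero (by rintro rfl; simp at hn)
  obtain ⟨ζ, hζ⟩ := HasEnoughRootsOfUnity.exists_primitiveRoot K n
  rw [nthRootsFinset_def, Multiset.toFinset_card_of_nodup (hζ.nthRoots_nodup ha),
    hζ.card_nthRoots, if_pos (IsAlgClosed.exists_pow_nat_eq a hpos)]

theorem sum_rootsOfUnity_pow_eq_zero {R : Type*} [CommRing R] [IsDomain R] {N : ℕ} [NeZero N]
    [Fintype (rootsOfUnity N R)] {ζ : R} (hζ : IsPrimitiveRoot ζ N) {a : ℕ} (ha : ¬N ∣ a) :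
    ∑ η : rootsOfUnity N R, ((η : Rˣ) : R) ^ a = 0 := by
  let χ : rootsOfUnity N R →* R :=
    (Units.coeHom R).comp ((powMonoidHom a).comp (rootsOfUnity N R).subtype)
  have hχ : χ ≠ 1 := by
    obtain ⟨u, rfl⟩ := hζ.isUnit (NeZero.ne N)
    intro h
    have hu : (u : R) ^ a = 1 := by
      simpa [χ] using DFunLike.congr_fun h ⟨u, (mem_rootsOfUnity' N u).mpr hζ.pow_eq_one⟩
    exact ha ((hζ.pow_eq_one_iff_dvd a).mp hu)
  simpa [χ] using sum_hom_units_eq_zero χ hχ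

theorem sum_sum_mul_sum_eq_sum_mul_sum {R ι₁ ι₂ α : Type*} [CommSemiring R] [Fintype ι₁]
    [Fintype ι₂] (s : Finset α) (f : ι₁ → R) (g : ι₂ → R) (F : α → ι₁ → R) (G : α → ι₂ → R) :
    ∑ i, ∑ j, f i * g j * ∑ p ∈ s, F p i * G p j =
      ∑ p ∈ s, (∑ i, f i * F p i) * ∑ j, g j * G p j := by
  simp_rw [sum_mul_sum, mul_sum]
  rw [sum_comm (s := s)]
  refine sum_congr rfl fun i _ => ?_
  rw [sum_comm (s := s)]
  exact sum_congr rfl fun j _ => sum_congr rfl fun p _ => by ring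

end general

section fibre

variable {κ : Type*} (K : Type*) [Field κ] [Field K] [Algebra κ K] [DecidableEq K]

noncomputable def twistedFiber (N q : ℕ) (u c : κ) : Finset K :=
  (nthRootsFinset N (algebraMap κ K u)).filter fun x => x ^ q = algebraMap κ K c * x

variable {K}

theorem mem_twistedFiber {N q : ℕ} (hN : 0 < N) {u c : κ} {x : K} :
    x ∈ twistedFiber K N q u c ↔ x ^ N = algebraMap κ K u ∧ x ^ q = algebraMap κ K c * x := by
  rw [twistedFiber, mem_filter, mem_nthRootsFinset hN]

theorem twistedFiber_zero {N q : ℕ} (hN : 0 < N) (hq : 0 < q) (c : κ) :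
    twistedFiber K N q 0 c = {0} := by
  ext x
  simp +contextual [mem_twistedFiber hN, hN.ne', hq.ne']

theorem card_twistedFiber_of_ne_zero [DecidableEq κ] [IsAlgClosed K] {N m : ℕ}
    (hN : (N : K) ≠ 0) {u : κ} (hu : u ≠ 0) (c : κ) :
    #(twistedFiber K N (N * m + 1) u c) = if u ^ m = c then N else 0 := by
  have hpos : 0 < N := Nat.pos_of_ne_zero (by rintro rfl; simp at hN)
  have hu' : algebraMap κ K u ≠ 0 := (_root_.map_ne_zero _).mpr hu
  have hfrob : ∀ x ∈ nthRootsFinset N (algebraMap κ K u),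
      x ^ (N * m + 1) = algebraMap κ K c * x ↔ u ^ m = c := by
    intro x hx
    rw [mem_nthRootsFinset hpos] at hx
    have hx0 : x ≠ 0 := by rintro rfl; exact hu' (by simpa [hpos.ne'] using hx.symm)
    rw [pow_succ, pow_mul, hx, ← map_pow, mul_left_inj' hx0, (algebraMap κ K).injective.eq_iff]
  rw [twistedFiber, filter_congr hfrob, filter_const, apply_ite card, card_empty,
    card_nthRootsFinset_of_isAlgClosed hN hu']

end fibre

section decomposition

variable {κ K : Type*} [Field κ] [Fintype κ] [DecidableEq κ] [Field K] [Algebra κ K]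
  [DecidableEq K]

theorem frobTwistedPoints_eq_biUnion {N : ℕ} (hN : 0 < N) (l : κ) {c₁ c₂ : κ}
    (hc₁ : c₁ ^ N = 1) (hc₂ : c₂ ^ N = 1) :
    frobTwistedPoints κ K N (Fintype.card κ) l c₁ c₂ =
      ↑((univ.filter fun p : κ × κ => (1 - p.1) * (1 - p.2) = l * p.1 * p.2).biUnion fun p =>
        twistedFiber K N (Fintype.card κ) p.1 c₁ ×ˢ twistedFiber K N (Fintype.card κ) p.2 c₂) := by
  ext ⟨x, y⟩
  simp only [frobTwistedPoints, Set.mem_ofPred_eq, coe_biUnion, coe_filter, mem_univ, true_and,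
    Set.mem_iUnion, coe_product, Set.mem_prod, mem_coe, mem_twistedFiber hN, exists_prop,
    Prod.exists]
  constructor
  · rintro ⟨hcurve, hx, hy⟩
    obtain ⟨u, hu⟩ := exists_algebraMap_eq_pow_of_pow_card_eq_mul hc₁ hx
    obtain ⟨v, hv⟩ := exists_algebraMap_eq_pow_of_pow_card_eq_mul hc₂ hy
    refine ⟨u, v, (algebraMap κ K).injective ?_, ⟨hu.symm, hx⟩, hv.symm, hy⟩
    simpa [hu, hv] using hcurve
  · rintro ⟨u, v, hcurve, ⟨hu, hx⟩, hv, hy⟩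
    refine ⟨?_, hx, hy⟩
    simpa [hu, hv] using congrArg (algebraMap κ K) hcurve

theorem card_frobTwistedPoints {N : ℕ} (hN : 0 < N) (l : κ) {c₁ c₂ : κ}
    (hc₁ : c₁ ^ N = 1) (hc₂ : c₂ ^ N = 1) :
    Nat.card (frobTwistedPoints κ K N (Fintype.card κ) l c₁ c₂) =
      ∑ p ∈ univ.filter (fun p : κ × κ => (1 - p.1) * (1 - p.2) = l * p.1 * p.2),
        #(twistedFiber K N (Fintype.card κ) p.1 c₁) *
          #(twistedFiber K N (Fintype.card κ) p.2 c₂) := by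
  rw [frobTwistedPoints_eq_biUnion hN l hc₁ hc₂, Nat.card_coe_set_eq, Set.ncard_coe_finset,
    card_biUnion]
  · simp only [card_product]
  · rintro p - p' - hne
    refine disjoint_left.mpr fun ⟨x, y⟩ hp hp' => hne ?_
    simp only [mem_product, mem_twistedFiber hN] at hp hp'
    exact Prod.ext ((algebraMap κ K).injective (hp.1.1.symm.trans hp'.1.1))
      ((algebraMap κ K).injective (hp.2.1.symm.trans hp'.2.1))

end decomposition

theorem sum_pow_mul_card_twistedFiber {κ K : Type*} [Field κ] [DecidableEq κ] [Field K]
    [Algebra κ K] [DecidableEq K] [IsAlgClosed K] {N m : ℕ} [NeZero N] (hN : (N : K) ≠ 0)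
    (ι : rootsOfUnity N ℂ ≃* rootsOfUnity N κ) {φ : κ → ℂ} (hφ0 : φ 0 = 0)
    (hφ : ∀ x : κˣ, ∃ ζ : rootsOfUnity N ℂ,
      φ (x : κ) = ((ζ : ℂˣ) : ℂ) ∧ ((ι ζ : κˣ) : κ) = (x : κ) ^ m)
    {a : ℕ} (ha : 0 < a) (ha' : a < N) (u : κ) :
    ∑ ζ : rootsOfUnity N ℂ,
        ((ζ : ℂˣ) : ℂ) ^ a * (#(twistedFiber K N (N * m + 1) u ((ι ζ : κˣ) : κ)) : ℂ) =
      N * φ u ^ a := by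
  rcases eq_or_ne u 0 with rfl | hu
  · simp [twistedFiber_zero (NeZero.pos N) (Nat.succ_pos _), hφ0, ha.ne',
      sum_rootsOfUnity_pow_eq_zero (Complex.isPrimitiveRoot_exp N (NeZero.ne N))
        (Nat.not_dvd_of_pos_of_lt ha ha')]
  · obtain ⟨ζ₀, hφu, hζ₀⟩ := hφ (Units.mk0 u hu)
    have hfiber : ∀ ζ, u ^ m = ((ι ζ : κˣ) : κ) ↔ ζ₀ = ζ := fun ζ => by
      rw [← Units.val_mk0 hu, ← hζ₀, ← Units.ext_iff, ← Subtype.ext_iff, ι.apply_eq_iff_eq]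
    simp_rw [card_twistedFiber_of_ne_zero hN hu, hfiber]
    simp [← hφu, mul_comm]

theorem twisted_point_count_general {κ K : Type*} [Field κ] [Fintype κ] [DecidableEq κ]
    [Field K] [Algebra κ K] [IsAlgClosure κ K]
    (N q : ℕ) [NeZero N] (hq : q = Fintype.card κ) (hNq : N ∣ q - 1)
    (ι : rootsOfUnity N ℂ ≃* rootsOfUnity N κ)
    (φ : κ → ℂ) (hφ0 : φ 0 = 0)
    (hφ : ∀ x : κˣ, ∃ ζ : rootsOfUnity N ℂ,
      φ (x : κ) = ((ζ : ℂˣ) : ℂ) ∧ ((ι ζ : κˣ) : κ) = (x : κ) ^ ((q - 1) / N))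
    (a b : ℕ) (ha1 : 1 ≤ a) (ha2 : a ≤ N - 1) (hb1 : 1 ≤ b) (hb2 : b ≤ N - 1)
    (l : κ) :
    (∀ ζ₁ ζ₂ : rootsOfUnity N ℂ,
      (frobTwistedPoints κ K N q l ((ι ζ₁ : κˣ) : κ) ((ι ζ₂ : κˣ) : κ)).Finite) ∧
    (1 / (N : ℂ) ^ 2) *
        ∑ ζ₁ : rootsOfUnity N ℂ, ∑ ζ₂ : rootsOfUnity N ℂ,
          ((ζ₁ : ℂˣ) : ℂ) ^ a * ((ζ₂ : ℂˣ) : ℂ) ^ b *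
            (Nat.card (frobTwistedPoints κ K N q l ((ι ζ₁ : κˣ) : κ) ((ι ζ₂ : κˣ) : κ)) : ℂ)
      = ∑ p ∈ Finset.univ.filter
            (fun p : κ × κ => (1 - p.1) * (1 - p.2) = l * p.1 * p.2),
          φ p.1 ^ a * φ p.2 ^ b := by
  classical
  subst hq
  obtain ⟨m, hm⟩ := hNq
  have hN := NeZero.pos N
  have hcard : Fintype.card κ = N * m + 1 := by have := Fintype.card_pos (α := κ); omega
  rw [hm, Nat.mul_div_cancel_left m hN] at hφ
  have : IsAlgClosed K := IsAlgClosure.isAlgClosed κ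
  have hNK : (N : K) ≠ 0 := by
    simpa using (algebraMap κ K).injective.ne (natCast_ne_zero_of_dvd_card_sub_one ⟨m, hm⟩)
  have hι : ∀ ζ, ((ι ζ : κˣ) : κ) ^ N = 1 := fun ζ => (mem_rootsOfUnity' N _).mp (ι ζ).2
  refine ⟨fun ζ₁ ζ₂ => by
    rw [frobTwistedPoints_eq_biUnion hN l (hι ζ₁) (hι ζ₂)]; exact finite_toSet _, ?_⟩
  simp_rw [card_frobTwistedPoints hN l (hι _) (hι _), hcard]
  push_cast
  rw [sum_sum_mul_sum_eq_sum_mul_sum]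
  simp_rw [sum_pow_mul_card_twistedFiber hNK ι hφ0 hφ (by omega) (by omega : a < N),
    sum_pow_mul_card_twistedFiber hNK ι hφ0 hφ (by omega) (by omega : b < N), mul_sum]
  have : (N : ℂ) ≠ 0 := NeZero.ne _
  refine sum_congr rfl fun p _ => ?_
  field_simp

/-- **Twisted point-counting identity in the proof of Theorem 3.2**: let `κ` be a finite
field with `q` elements, `N ∣ q − 1`, `κ̄ = K` an algebraic closure of `κ`, `ι` a group
isomorphism `μ_N(ℂ) ≃ μ_N(κ)`, and `φ : κ → ℂ` the character with `φ(0) = 0` and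
`φ(x) = ι⁻¹(x^{(q−1)/N})` for `x ≠ 0`.  Then for `1 ≤ a, b ≤ N − 1` and `λ ∈ κ`, `λ ≠ 0, 1`,
each set of Frobenius-twisted points of the hypergeometric curve is finite, and
`(1/N²) ∑_{ζ₁,ζ₂∈μ_N(ℂ)} ζ₁^a ζ₂^b · #{(x,y) ∈ κ̄² : (1−x^N)(1−y^N) = λx^Ny^N, x^q = ι(ζ₁)x,
y^q = ι(ζ₂)y} = ∑_{(u,v)∈κ², (1−u)(1−v)=λuv} φ(u)^a φ(v)^b`. -/
theorem twisted_point_count {κ K : Type*} [Field κ] [Fintype κ] [DecidableEq κ]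
    [Field K] [Algebra κ K] [IsAlgClosure κ K]
    (N q : ℕ) [NeZero N] (hq : q = Fintype.card κ) (hNq : N ∣ q - 1)
    (ι : rootsOfUnity N ℂ ≃* rootsOfUnity N κ)
    (φ : κ → ℂ) (hφ0 : φ 0 = 0)
    (hφ : ∀ x : κˣ, ∃ ζ : rootsOfUnity N ℂ,
      φ (x : κ) = ((ζ : ℂˣ) : ℂ) ∧ ((ι ζ : κˣ) : κ) = (x : κ) ^ ((q - 1) / N))
    (a b : ℕ) (ha1 : 1 ≤ a) (ha2 : a ≤ N - 1) (hb1 : 1 ≤ b) (hb2 : b ≤ N - 1)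
    (l : κ) (hl0 : l ≠ 0) (hl1 : l ≠ 1) :
    (∀ ζ₁ ζ₂ : rootsOfUnity N ℂ,
      (frobTwistedPoints κ K N q l ((ι ζ₁ : κˣ) : κ) ((ι ζ₂ : κˣ) : κ)).Finite) ∧
    (1 / (N : ℂ) ^ 2) *
        ∑ ζ₁ : rootsOfUnity N ℂ, ∑ ζ₂ : rootsOfUnity N ℂ,
          ((ζ₁ : ℂˣ) : ℂ) ^ a * ((ζ₂ : ℂˣ) : ℂ) ^ b *
            (Nat.card (frobTwistedPoints κ K N q l ((ι ζ₁ : κˣ) : κ) ((ι ζ₂ : κˣ) : κ)) : ℂ)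
      = ∑ p ∈ Finset.univ.filter
            (fun p : κ × κ => (1 - p.1) * (1 - p.2) = l * p.1 * p.2),
          φ p.1 ^ a * φ p.2 ^ b :=
  twisted_point_count_general N q hq hNq ι φ hφ0 hφ a b ha1 ha2 hb1 hb2 l

end adelicHGF
end
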